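/- Let q be a probability density on ℝ^n, let k : ℝ^n → ℝ^n → ℝ be a perturbation kernel such that for every x₀ the map x ↦ k x x₀ is a positive, continuously differentiable probability density, and let q̃ x = ∫ k x x₀ · q x₀ dx₀ be the perturbed marginal, assumed positive and differentiable with ∇ q̃ x = ∫ ∇ₓ k x x₀ · q x₀ dx₀. Then for every vector field s : ℝ^n → ℝ^n with all the integrals below finite, the denoising score matching objective equals the explicit score matching objective up to a constant independent of s: ∬ q x₀ · k x x₀ · ‖ s x − ∇ₓ log (k x x₀) ‖² dx dx₀ = ∫ q̃ x · ‖ s x − ∇ log (q̃ x) ‖² dx + C, where C = ∬ q x₀ · k x x₀ · ‖∇ₓ log (k x x₀)‖² dx dx₀ − ∫ q̃ x · ‖∇ log (q̃ x)‖² dx does not depend on s. In particular, among all such vector fields, the denoising objective is minimized exactly by the marginal score s x = ∇ log (q̃ x). -/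

import Mathlib

open MeasureTheory Real Filter Function Topology
open scoped InnerProductSpace

/-!
For fixed `x`, the weights `w x₀ = q x₀ * k x x₀` have total mass `q̃ x`, and by the log-derivative
trick `k ∇ₓ log k = ∇ₓ k` and differentiation under the integral sign their weighted mean of the
conditional scores `∇ₓ log k x x₀` is the marginal score `∇ log q̃ x`. The bias-variance identity
`∫ w ‖v - g‖² = W ‖v - ḡ‖² + (∫ w ‖g‖² - W ‖ḡ‖²)` (with `W = ∫ w`, `ḡ = W⁻¹ ∫ w g`) therefore
holds in every fibre. Integrating it over `x` with `v = s x` gives the decomposition, and with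
`v = ∇ log q̃ x` it shows that the constant is the denoising objective of the marginal score.

Joint measurability of `k x x₀ * q x₀` and of its `x`-gradient, needed for Fubini, comes from
continuity in `x` and integrability in `x₀` by a Carathéodory-type argument.
-/

section Gradient

variable {F : Type*} [NormedAddCommGroup F] [InnerProductSpace ℝ F] [CompleteSpace F]
  {f : F → ℝ} {f' x : F}

theorem HasGradientAt.mul_const (hf : HasGradientAt f f' x) (c : ℝ) :
    HasGradientAt (fun y => f y * c) (c • f') x := by
  rw [hasGradientAt_iff_hasFDerivAt, map_smulₛₗ]
  exact (hasGradientAt_iff_hasFDerivAt.1 hf).mul_const c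

theorem HasGradientAt.log (hf : HasGradientAt f f' x) (hx : f x ≠ 0) :
    HasGradientAt (fun y => log (f y)) ((f x)⁻¹ • f') x := by
  rw [hasGradientAt_iff_hasFDerivAt, map_smulₛₗ]
  exact (hasGradientAt_iff_hasFDerivAt.1 hf).log hx

theorem smul_gradient_log (hf : DifferentiableAt ℝ f x) (hx : f x ≠ 0) :
    f x • gradient (fun y => log (f y)) x = gradient f x := by
  rw [(hf.hasGradientAt.log hx).gradient, smul_inv_smul₀ hx]

theorem ContDiff.continuous_gradient (hf : ContDiff ℝ 1 f) : Continuous (gradient f) :=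
  (InnerProductSpace.toDual ℝ F).symm.continuous.comp (hf.continuous_fderiv one_ne_zero)

theorem measurable_gradient [MeasurableSpace F] [BorelSpace F] : Measurable (gradient f) :=
  (InnerProductSpace.toDual ℝ F).symm.continuous.measurable.comp (measurable_fderiv ℝ f)

end Gradient

section WeightedMeanSquare

variable {F : Type*} [NormedAddCommGroup F] [InnerProductSpace ℝ F]

theorem mul_norm_sub_sq (c : ℝ) (v g : F) :
    c * ‖v - g‖ ^ 2 = c * ‖v‖ ^ 2 - 2 * ⟪v, c • g⟫_ℝ + c * ‖g‖ ^ 2 := by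
  rw [norm_sub_sq_real, real_inner_smul_right]
  ring

variable {α : Type*} [MeasurableSpace α] {ν : Measure α}

theorem MeasureTheory.Integrable.smul_of_mul_norm_sq {w : α → ℝ} {g : α → F}
    (hw : Integrable w ν) (hwg : Integrable (fun a => w a * ‖g a‖ ^ 2) ν)
    (hm : AEStronglyMeasurable (fun a => w a • g a) ν) :
    Integrable (fun a => w a • g a) ν := by
  refine (hw.norm.add hwg.norm).mono' hm (ae_of_all _ fun a => ?_)
  have hg : ‖g a‖ ≤ 1 + ‖g a‖ ^ 2 := by nlinarith [sq_nonneg (‖g a‖ - 1)]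
  simpa [norm_smul, norm_mul, mul_add] using
    mul_le_mul_of_nonneg_left hg (norm_nonneg (w a))

theorem MeasureTheory.Integrable.mul_norm_sub_sq {w : α → ℝ} {g : α → F}
    (hw : Integrable w ν) (hwg : Integrable (fun a => w a • g a) ν)
    (hwg2 : Integrable (fun a => w a * ‖g a‖ ^ 2) ν) (v : F) :
    Integrable (fun a => w a * ‖v - g a‖ ^ 2) ν := by
  simp_rw [_root_.mul_norm_sub_sq _ v]
  exact ((hw.mul_const _).sub ((hwg.const_inner v).const_mul 2)).add hwg2

theorem integral_mul_norm_sub_sq [CompleteSpace F] {w : α → ℝ} {g : α → F}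
    (hw : Integrable w ν) (hwg : Integrable (fun a => w a • g a) ν)
    (hwg2 : Integrable (fun a => w a * ‖g a‖ ^ 2) ν) (hW : ∫ a, w a ∂ν ≠ 0) (v : F) :
    ∫ a, w a * ‖v - g a‖ ^ 2 ∂ν =
      (∫ a, w a ∂ν) * ‖v - (∫ a, w a ∂ν)⁻¹ • ∫ a, w a • g a ∂ν‖ ^ 2 +
        ((∫ a, w a * ‖g a‖ ^ 2 ∂ν) -
          (∫ a, w a ∂ν) * ‖(∫ a, w a ∂ν)⁻¹ • ∫ a, w a • g a ∂ν‖ ^ 2) := by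
  have hlin : Integrable (fun a => w a * ‖v‖ ^ 2 - 2 * ⟪v, w a • g a⟫_ℝ) ν :=
    (hw.mul_const _).sub ((hwg.const_inner v).const_mul 2)
  simp_rw [mul_norm_sub_sq _ v, integral_add hlin hwg2, integral_sub (hw.mul_const _)
    ((hwg.const_inner v).const_mul 2), integral_mul_const, integral_const_mul, integral_inner hwg,
    smul_inv_smul₀ hW]
  ring

end WeightedMeanSquare

section Measurability

variable {α : Type*} [MeasurableSpace α] {ν : Measure α}

theorem tendsto_inv_natCast_add_one_nhdsNE_zero :
    Tendsto (fun j : ℕ => ((j : ℝ) + 1)⁻¹) atTop (𝓝[≠] 0) :=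
  tendsto_nhdsWithin_of_tendsto_nhds_of_eventually_within _
    (tendsto_one_div_add_atTop_nhds_zero_nat.congr fun _ => one_div _)
    (Eventually.of_forall fun j => inv_ne_zero (Nat.cast_add_one_ne_zero j))

theorem aestronglyMeasurable_hasFDerivAt_apply_of_param {E : Type*} [NormedAddCommGroup E]
    [NormedSpace ℝ E] {f : E → α → ℝ} {f' : α → E →L[ℝ] ℝ} {x : E}
    (hf : ∀ y, AEStronglyMeasurable (f y) ν) (hf' : ∀ a, HasFDerivAt (f · a) (f' a) x)
    (v : E) :
    AEStronglyMeasurable (fun a => f' a v) ν := by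
  refine aestronglyMeasurable_of_tendsto_ae atTop
    (f := fun (j : ℕ) a => slope (fun t : ℝ => f (x + t • v) a) 0 ((j : ℝ) + 1)⁻¹)
    (fun j => ?_) (ae_of_all _ fun a => ?_)
  · simp only [slope, vsub_eq_sub, smul_eq_mul]
    exact ((hf _).sub (hf _)).const_mul _
  · have hline : HasDerivAt (fun t : ℝ => x + t • v) v 0 := by
      simpa using ((hasDerivAt_id (0 : ℝ)).smul_const v).const_add x
    have hf'' : HasFDerivAt (f · a) (f' a) (x + (0 : ℝ) • v) := by simpa using hf' a
    exact (hasDerivAt_iff_tendsto_slope.1 (hf''.comp_hasDerivAt 0 hline)).comp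
      tendsto_inv_natCast_add_one_nhdsNE_zero

theorem aestronglyMeasurable_of_hasGradientAt_param {F : Type*}
    [NormedAddCommGroup F] [InnerProductSpace ℝ F] [FiniteDimensional ℝ F]
    {f : F → α → ℝ} {g : α → F} {x : F}
    (hf : ∀ y, AEStronglyMeasurable (f y) ν) (hg : ∀ a, HasGradientAt (f · a) (g a) x) :
    AEStronglyMeasurable g ν := by
  let b := stdOrthonormalBasis ℝ F
  have hcoord : ∀ i, AEStronglyMeasurable (fun a => ⟪b i, g a⟫_ℝ) ν := fun i => by
    have := aestronglyMeasurable_hasFDerivAt_apply_of_param hf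
      (fun a => hasGradientAt_iff_hasFDerivAt.1 (hg a)) (b i)
    simpa only [InnerProductSpace.toDual_apply_apply, real_inner_comm] using this
  rw [show g = fun a => ∑ i, ⟪b i, g a⟫_ℝ • b i from
    funext fun a => (b.sum_repr' (g a)).symm]
  exact Finset.aestronglyMeasurable_fun_sum _ fun i _ => (hcoord i).smul_const _

theorem aestronglyMeasurable_uncurry_of_continuous_of_aestronglyMeasurable {X E : Type*}
    [TopologicalSpace X] [TopologicalSpace.MetrizableSpace X] [MeasurableSpace X]
    [SecondCountableTopology X] [OpensMeasurableSpace X] [NormedAddCommGroup E]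
    {μ : Measure X} {u : X → α → E} (hu_cont : ∀ a, Continuous (u · a))
    (hu : ∀ x, AEStronglyMeasurable (u x) ν) :
    AEStronglyMeasurable (uncurry u) (μ.prod ν) := by
  obtain ⟨t, ht⟩ : ∃ t : ℕ → SimpleFunc X X,
      ∀ x a, Tendsto (fun j => u (t j x) a) atTop (𝓝 (u x a)) :=
    ⟨stronglyMeasurable_id.approx, fun x a =>
      ((hu_cont a).tendsto x).comp (stronglyMeasurable_id.tendsto_approx x)⟩
  refine aestronglyMeasurable_of_tendsto_ae atTop (f := fun j p => u (t j p.1) p.2)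
    (fun j => ?_) (ae_of_all _ fun p => ht p.1 p.2)
  -- `t j` has finite range, so the approximant is a finite sum of indicators
  have hsum : (fun p : X × α => u (t j p.1) p.2) = fun p =>
      ∑ c ∈ (t j).range, {p : X × α | t j p.1 = c}.indicator (fun p => u c p.2) p := by
    ext p
    classical
    simp [Set.indicator_apply, Finset.sum_ite_eq]
  rw [hsum]
  exact Finset.aestronglyMeasurable_fun_sum _ fun c _ =>
    (hu c).comp_snd.indicator (measurable_fst ((t j).measurableSet_fiber c))

theorem integrable_prod_of_nonneg_of_ae_integral_eq {X : Type*} [MeasurableSpace X]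
    {μ : Measure X} [SFinite ν] {f : X × α → ℝ} {g : X → ℝ}
    (hf_nonneg : 0 ≤ f) (hf : AEStronglyMeasurable f (μ.prod ν))
    (hfg : ∀ᵐ x ∂μ, Integrable (fun a => f (x, a)) ν ∧ ∫ a, f (x, a) ∂ν = g x)
    (hg : Integrable g μ) : Integrable f (μ.prod ν) := by
  refine (integrable_prod_iff hf).2 ⟨hfg.mono fun x hx => hx.1, hg.congr ?_⟩
  filter_upwards [hfg] with x hx
  simp_rw [Real.norm_of_nonneg (hf_nonneg _)]
  exact hx.2.symm

end Measurability

section ScoreMatching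

variable {F : Type*} [NormedAddCommGroup F] [InnerProductSpace ℝ F] [FiniteDimensional ℝ F]
  {α : Type*} [MeasurableSpace α] {ν : Measure α} {q : α → ℝ} {k : F → α → ℝ}

theorem aestronglyMeasurable_smul_gradient_of_param {x : F}
    (hkq : ∀ y, AEStronglyMeasurable (fun a => k y a * q a) ν)
    (hk : ∀ a, DifferentiableAt ℝ (k · a) x) :
    AEStronglyMeasurable (fun a => q a • gradient (k · a) x) ν :=
  aestronglyMeasurable_of_hasGradientAt_param hkq fun a => (hk a).hasGradientAt.mul_const (q a)

theorem integral_mul_norm_sub_gradient_log_sq {qt : F → ℝ} {x : F} (hk_pos : ∀ a, 0 < k x a)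
    (hk : ∀ a, DifferentiableAt ℝ (k · a) x)
    (hkq : ∀ y, AEStronglyMeasurable (fun a => k y a * q a) ν)
    (hqt : qt x = ∫ a, k x a * q a ∂ν) (hqt_pos : 0 < qt x)
    (hqt_diff : DifferentiableAt ℝ qt x)
    (hqt_grad : gradient qt x = ∫ a, q a • gradient (k · a) x ∂ν)
    (hck : Integrable (fun a => q a * k x a * ‖gradient (fun y => log (k y a)) x‖ ^ 2) ν)
    (v : F) :
    Integrable (fun a => q a * k x a * ‖v - gradient (fun y => log (k y a)) x‖ ^ 2) ν ∧
      ∫ a, q a * k x a * ‖v - gradient (fun y => log (k y a)) x‖ ^ 2 ∂ν =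
        qt x * ‖v - gradient (fun y => log (qt y)) x‖ ^ 2 +
          ((∫ a, q a * k x a * ‖gradient (fun y => log (k y a)) x‖ ^ 2 ∂ν) -
            qt x * ‖gradient (fun y => log (qt y)) x‖ ^ 2) := by
  have hW : ∫ a, q a * k x a ∂ν = qt x := by simp_rw [mul_comm (q _)]; exact hqt.symm
  have hw : Integrable (fun a => q a * k x a) ν := .of_integral_ne_zero (hW ▸ hqt_pos.ne')
  have hscore : ∀ a,
      (q a * k x a) • gradient (fun y => log (k y a)) x = q a • gradient (k · a) x := fun a => by
    rw [mul_smul, smul_gradient_log (hk a) (hk_pos a).ne']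
  have hwg : Integrable (fun a => (q a * k x a) • gradient (fun y => log (k y a)) x) ν := by
    refine hw.smul_of_mul_norm_sq hck ?_
    simp_rw [hscore]
    exact aestronglyMeasurable_smul_gradient_of_param hkq hk
  have hmean : (qt x)⁻¹ • ∫ a, (q a * k x a) • gradient (fun y => log (k y a)) x ∂ν =
      gradient (fun y => log (qt y)) x := by
    simp_rw [hscore]
    rw [← hqt_grad, (hqt_diff.hasGradientAt.log hqt_pos.ne').gradient]
  refine ⟨hw.mul_norm_sub_sq hwg hck v, ?_⟩
  rw [integral_mul_norm_sub_sq hw hwg hck (hW ▸ hqt_pos.ne') v, hW, hmean]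

theorem aestronglyMeasurable_mul_norm_sub_gradient_log_sq [MeasurableSpace F]
    [OpensMeasurableSpace F] {μ : Measure F} [SFinite ν] (hk_pos : ∀ x a, 0 < k x a)
    (hk_c1 : ∀ a, ContDiff ℝ 1 (k · a))
    (hkq : ∀ x, AEStronglyMeasurable (fun a => k x a * q a) ν)
    (hck : AEStronglyMeasurable (fun z : F × α =>
      q z.2 * k z.1 z.2 * ‖gradient (fun y => log (k y z.2)) z.1‖ ^ 2) (μ.prod ν))
    {v : F → F} (hv : AEStronglyMeasurable v μ) :
    AEStronglyMeasurable (fun z : F × α =>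
      q z.2 * k z.1 z.2 * ‖v z.1 - gradient (fun y => log (k y z.2)) z.1‖ ^ 2)
      (μ.prod ν) := by
  have hK : AEStronglyMeasurable (fun z : F × α => k z.1 z.2 * q z.2) (μ.prod ν) :=
    aestronglyMeasurable_uncurry_of_continuous_of_aestronglyMeasurable
      (fun a => (hk_c1 a).continuous.mul continuous_const) hkq
  have hV :
      AEStronglyMeasurable (fun z : F × α => q z.2 • gradient (k · z.2) z.1) (μ.prod ν) :=
    aestronglyMeasurable_uncurry_of_continuous_of_aestronglyMeasurable
      (u := fun x a => q a • gradient (k · a) x)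
      (fun a => (hk_c1 a).continuous_gradient.const_smul (q a))
      fun x => aestronglyMeasurable_smul_gradient_of_param hkq
        fun a => (hk_c1 a).differentiable one_ne_zero x
  have hexp : ∀ z : F × α,
      q z.2 * k z.1 z.2 * ‖v z.1 - gradient (fun y => log (k y z.2)) z.1‖ ^ 2 =
        k z.1 z.2 * q z.2 * ‖v z.1‖ ^ 2 -
            2 * ⟪v z.1, q z.2 • gradient (k · z.2) z.1⟫_ℝ +
          q z.2 * k z.1 z.2 * ‖gradient (fun y => log (k y z.2)) z.1‖ ^ 2 := fun z => by
    rw [mul_norm_sub_sq, mul_smul, mul_comm (q _),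
      smul_gradient_log ((hk_c1 z.2).differentiable one_ne_zero z.1) (hk_pos z.1 z.2).ne']
  simp_rw [hexp]
  exact ((hK.mul (hv.comp_fst.norm.pow 2)).sub ((hv.comp_fst.inner hV).const_mul 2)).add hck

end ScoreMatching

theorem denoising_score_matching_equals_explicit_general
    (n : ℕ)
    (q : EuclideanSpace ℝ (Fin n) → ℝ)
    (k : EuclideanSpace ℝ (Fin n) → EuclideanSpace ℝ (Fin n) → ℝ)
    (hq_nonneg : ∀ x₀, 0 ≤ q x₀)
    (hk_pos : ∀ x x₀, 0 < k x x₀)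
    (hk_c1 : ∀ x₀, ContDiff ℝ 1 (fun x => k x x₀))
    (qt : EuclideanSpace ℝ (Fin n) → ℝ)
    (hqt : ∀ x, qt x = ∫ x₀, k x x₀ * q x₀)
    (hqt_pos : ∀ x, 0 < qt x)
    (hqt_diff : Differentiable ℝ qt)
    (hqt_grad : ∀ x, gradient qt x = ∫ x₀, q x₀ • gradient (fun x' => k x' x₀) x)
    (s : EuclideanSpace ℝ (Fin n) → EuclideanSpace ℝ (Fin n))
    (hint_dsm : Integrable (fun z : EuclideanSpace ℝ (Fin n) × EuclideanSpace ℝ (Fin n) =>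
      q z.2 * k z.1 z.2 * ‖s z.1 - gradient (fun x' => Real.log (k x' z.2)) z.1‖ ^ 2))
    (hint_esm : Integrable (fun x : EuclideanSpace ℝ (Fin n) =>
      qt x * ‖s x - gradient (fun x' => Real.log (qt x')) x‖ ^ 2))
    (hint_ck : Integrable (fun z : EuclideanSpace ℝ (Fin n) × EuclideanSpace ℝ (Fin n) =>
      q z.2 * k z.1 z.2 * ‖gradient (fun x' => Real.log (k x' z.2)) z.1‖ ^ 2))
    (hint_cq : Integrable (fun x : EuclideanSpace ℝ (Fin n) =>
      qt x * ‖gradient (fun x' => Real.log (qt x')) x‖ ^ 2)) :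
    (∫ x₀, ∫ x, q x₀ * k x x₀ * ‖s x - gradient (fun x' => Real.log (k x' x₀)) x‖ ^ 2) =
      (∫ x, qt x * ‖s x - gradient (fun x' => Real.log (qt x')) x‖ ^ 2) +
        ((∫ x₀, ∫ x, q x₀ * k x x₀ * ‖gradient (fun x' => Real.log (k x' x₀)) x‖ ^ 2) -
          ∫ x, qt x * ‖gradient (fun x' => Real.log (qt x')) x‖ ^ 2) ∧
    (∫ x₀, ∫ x, q x₀ * k x x₀ *
        ‖gradient (fun x' => Real.log (qt x')) x -
            gradient (fun x' => Real.log (k x' x₀)) x‖ ^ 2) ≤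
      ∫ x₀, ∫ x, q x₀ * k x x₀ * ‖s x - gradient (fun x' => Real.log (k x' x₀)) x‖ ^ 2 := by
  have hkq : ∀ x, AEStronglyMeasurable (fun x₀ => k x x₀ * q x₀) :=
    fun x => (Integrable.of_integral_ne_zero (hqt x ▸ (hqt_pos x).ne')).aestronglyMeasurable
  have hfiber := hint_ck.prod_right_ae.mono fun x hx =>
    integral_mul_norm_sub_gradient_log_sq (hk_pos x)
      (fun x₀ => (hk_c1 x₀).differentiable one_ne_zero x) hkq (hqt x) (hqt_pos x) (hqt_diff x)
      (hqt_grad x) hx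
  have hJ : Integrable fun x =>
      (∫ x₀, q x₀ * k x x₀ * ‖gradient (fun x' => log (k x' x₀)) x‖ ^ 2) -
        qt x * ‖gradient (fun x' => log (qt x')) x‖ ^ 2 :=
    hint_ck.integral_prod_left.sub hint_cq
  have hC :
      (∫ x₀, ∫ x, q x₀ * k x x₀ * ‖gradient (fun x' => log (k x' x₀)) x‖ ^ 2) -
      ∫ x, qt x * ‖gradient (fun x' => log (qt x')) x‖ ^ 2 =
      ∫ x, ((∫ x₀, q x₀ * k x x₀ * ‖gradient (fun x' => log (k x' x₀)) x‖ ^ 2) -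
        qt x * ‖gradient (fun x' => log (qt x')) x‖ ^ 2) := by
    rw [integral_sub hint_ck.integral_prod_left hint_cq]
    exact congrArg (· - _) (integral_integral_swap hint_ck).symm
  have hdsm :
      (∫ x₀, ∫ x, q x₀ * k x x₀ * ‖s x - gradient (fun x' => log (k x' x₀)) x‖ ^ 2) =
      (∫ x, qt x * ‖s x - gradient (fun x' => log (qt x')) x‖ ^ 2) +
        ((∫ x₀, ∫ x, q x₀ * k x x₀ * ‖gradient (fun x' => log (k x' x₀)) x‖ ^ 2) -
          ∫ x, qt x * ‖gradient (fun x' => log (qt x')) x‖ ^ 2) := by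
    rw [hC, ← integral_add hint_esm hJ]
    exact (integral_integral_swap hint_dsm).symm.trans
      (integral_congr_ae (hfiber.mono fun x hx => (hx (s x)).2))
  have hG := integrable_prod_of_nonneg_of_ae_integral_eq
    (fun z => mul_nonneg (mul_nonneg (hq_nonneg z.2) (hk_pos z.1 z.2).le) (sq_nonneg _))
    (aestronglyMeasurable_mul_norm_sub_gradient_log_sq hk_pos hk_c1 hkq
      hint_ck.aestronglyMeasurable measurable_gradient.aestronglyMeasurable)
    (hfiber.mono fun x hx => by simpa using hx (gradient (fun x' => log (qt x')) x)) hJ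
  refine ⟨hdsm, ?_⟩
  rw [← integral_integral_swap hG, integral_congr_ae (hfiber.mono fun x hx =>
    by simpa using (hx (gradient (fun x' => log (qt x')) x)).2), ← hC, hdsm]
  exact le_add_of_nonneg_left
    (integral_nonneg fun x => mul_nonneg (hqt_pos x).le (sq_nonneg _))

/-- **Denoising score matching equals explicit score matching up to a constant.**
For a probability density `q`, a perturbation kernel `k` (for each `x₀`,
`x ↦ k x x₀` a positive C¹ probability density), and the perturbed marginal
`q̃ x = ∫ k x x₀ · q x₀ dx₀` (positive, differentiable under the integral sign),
every vector field `s` with the stated integrabilities satisfies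
`∬ q·k·‖s x − ∇ₓ log k x x₀‖² = ∫ q̃·‖s − ∇ log q̃‖² + C`, where
`C = ∬ q·k·‖∇ₓ log k x x₀‖² − ∫ q̃·‖∇ log q̃‖²` does not depend on `s`;
in particular the denoising objective is minimized by the marginal score. -/
theorem denoising_score_matching_equals_explicit
    (n : ℕ)
    (q : EuclideanSpace ℝ (Fin n) → ℝ)
    (k : EuclideanSpace ℝ (Fin n) → EuclideanSpace ℝ (Fin n) → ℝ)
    (hq_nonneg : ∀ x₀, 0 ≤ q x₀)
    (hq_prob : ∫ x₀, q x₀ = 1)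
    (hk_pos : ∀ x x₀, 0 < k x x₀)
    (hk_c1 : ∀ x₀, ContDiff ℝ 1 (fun x => k x x₀))
    (hk_prob : ∀ x₀, ∫ x, k x x₀ = 1)
    (qt : EuclideanSpace ℝ (Fin n) → ℝ)
    (hqt : ∀ x, qt x = ∫ x₀, k x x₀ * q x₀)
    (hqt_pos : ∀ x, 0 < qt x)
    (hqt_diff : Differentiable ℝ qt)
    (hqt_grad : ∀ x, gradient qt x = ∫ x₀, q x₀ • gradient (fun x' => k x' x₀) x)
    (s : EuclideanSpace ℝ (Fin n) → EuclideanSpace ℝ (Fin n))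
    (hint_dsm : Integrable (fun z : EuclideanSpace ℝ (Fin n) × EuclideanSpace ℝ (Fin n) =>
      q z.2 * k z.1 z.2 * ‖s z.1 - gradient (fun x' => Real.log (k x' z.2)) z.1‖ ^ 2))
    (hint_esm : Integrable (fun x : EuclideanSpace ℝ (Fin n) =>
      qt x * ‖s x - gradient (fun x' => Real.log (qt x')) x‖ ^ 2))
    (hint_ck : Integrable (fun z : EuclideanSpace ℝ (Fin n) × EuclideanSpace ℝ (Fin n) =>
      q z.2 * k z.1 z.2 * ‖gradient (fun x' => Real.log (k x' z.2)) z.1‖ ^ 2))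
    (hint_cq : Integrable (fun x : EuclideanSpace ℝ (Fin n) =>
      qt x * ‖gradient (fun x' => Real.log (qt x')) x‖ ^ 2)) :
    (∫ x₀, ∫ x, q x₀ * k x x₀ * ‖s x - gradient (fun x' => Real.log (k x' x₀)) x‖ ^ 2) =
      (∫ x, qt x * ‖s x - gradient (fun x' => Real.log (qt x')) x‖ ^ 2) +
        ((∫ x₀, ∫ x, q x₀ * k x x₀ * ‖gradient (fun x' => Real.log (k x' x₀)) x‖ ^ 2) -
          ∫ x, qt x * ‖gradient (fun x' => Real.log (qt x')) x‖ ^ 2) ∧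
    (∫ x₀, ∫ x, q x₀ * k x x₀ *
        ‖gradient (fun x' => Real.log (qt x')) x -
            gradient (fun x' => Real.log (k x' x₀)) x‖ ^ 2) ≤
      ∫ x₀, ∫ x, q x₀ * k x x₀ * ‖s x - gradient (fun x' => Real.log (k x' x₀)) x‖ ^ 2 :=
  denoising_score_matching_equals_explicit_general n q k hq_nonneg hk_pos hk_c1 qt hqt hqt_pos
    hqt_diff hqt_grad s hint_dsm hint_esm hint_ck hint_cq
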